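/- arXiv:2601.00511 — 4 statements merged into one kernel-verified Lean document; each statement's English description precedes it below -/
import Mathlib

section
/- Let t ∈ F_2[u,u^{-1}] be a non-constant Laurent polynomial (i.e., t is not an element of F_2), and define b_n by b_0 = 0, b_1 = 1, b_{n+1} = t b_n + b_{n-1}. Then for every n ≥ 1, b_{n-1} + b_{n+1} ≠ 0. Consequently det(L^n − I) ≠ 0 for all n ≥ 1, where L = [[0,1],[1,t]]. -/
open LaurentPolynomial

namespace Stmt5Aux

abbrev L := LaurentPolynomial (ZMod 2)

lemma le_degree {f : L} {n : ℤ} (h : f.coeff n ≠ 0) : (n : WithBot ℤ) ≤ f.degree :=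
  Finset.le_max (Finsupp.mem_support_iff.2 h)

lemma eq_zero_of_degree_lt {f : L} {n : ℤ} (h : f.degree < (n : WithBot ℤ)) : f.coeff n = 0 := by
  by_contra hn
  exact absurd (le_degree hn) h.not_ge

lemma exists_degree {f : L} (h : f ≠ 0) : ∃ n : ℤ, f.degree = (n : WithBot ℤ) ∧ f.coeff n ≠ 0 := by
  obtain ⟨n, hn⟩ := Finset.max_of_nonempty (Finsupp.support_nonempty_iff.2 (mt AddMonoidAlgebra.coeff_eq_zero.1 h))
  exact ⟨n, hn, Finsupp.mem_support_iff.1 (Finset.mem_of_max hn)⟩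

lemma coeff_mul_T (f : L) (k m : ℤ) : (f * T k : L).coeff m = f.coeff (m - k) := by
  have : (f * T k : L).coeff m = f.coeff (m - k) * 1 := AddMonoidAlgebra.coeff_mul_single_apply f 1 k m
  simpa using this

lemma degree_mul_T (f : L) (k : ℤ) : (f * T k).degree = f.degree + k := by
  by_cases hf : f = 0
  · simp [hf, LaurentPolynomial.degree_zero]
  obtain ⟨d, hd, hfd⟩ := exists_degree hf
  have h1 : (f * T k : L).coeff (d + k) ≠ 0 := by rw [coeff_mul_T]; simpa using hfd
  refine le_antisymm ?_ ?_
  · apply Finset.max_le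
    intro m hm
    have hm' : f.coeff (m - k) ≠ 0 := by rw [← coeff_mul_T f k m]; exact Finsupp.mem_support_iff.1 hm
    have h2 := le_degree hm'
    rw [hd] at h2
    have h3 : m - k ≤ d := WithBot.coe_le_coe.1 h2
    rw [hd, ← WithBot.coe_add, WithBot.coe_le_coe]
    omega
  · have h2 := le_degree h1
    rw [hd, ← WithBot.coe_add]
    exact h2

lemma degree_toLaurent {p : Polynomial (ZMod 2)} (hp : p ≠ 0) :
    (Polynomial.toLaurent p).degree = ((p.natDegree : ℤ) : WithBot ℤ) := by
  refine le_antisymm ?_ ?_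
  · apply Finset.max_le
    intro m hm
    rw [toLaurent_support] at hm
    obtain ⟨a, ha, rfl⟩ := Finset.mem_map.1 hm
    have : a ≤ p.natDegree := Polynomial.le_natDegree_of_ne_zero (Polynomial.mem_support_iff.1 ha)
    simp only [Nat.castEmbedding_apply, WithBot.coe_le_coe]
    exact_mod_cast this
  · apply Finset.le_max
    rw [toLaurent_support, Finset.mem_map]
    exact ⟨p.natDegree, Polynomial.natDegree_mem_support_of_nonzero hp, rfl⟩

lemma mul_T_ne_zero {f : L} (hf : f ≠ 0) (k : ℤ) : f * T k ≠ 0 :=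
  fun h => hf (by simpa using (isUnit_T (R := ZMod 2) k).mul_left_eq_zero.1 h)

lemma degree_mul {f g : L} (hf : f ≠ 0) (hg : g ≠ 0) :
    (f * g).degree = f.degree + g.degree := by
  obtain ⟨n, p, hp⟩ := exists_T_pow f
  obtain ⟨m, q, hq⟩ := exists_T_pow g
  have hp0 : p ≠ 0 := fun h => (mul_T_ne_zero hf n) (by rw [← hp, h, map_zero])
  have hq0 : q ≠ 0 := fun h => (mul_T_ne_zero hg m) (by rw [← hq, h, map_zero])
  have hfg : f * g ≠ 0 := mul_ne_zero hf hg
  obtain ⟨df, hdf, _⟩ := exists_degree hf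
  obtain ⟨dg, hdg, _⟩ := exists_degree hg
  obtain ⟨dfg, hdfg, _⟩ := exists_degree hfg
  have e1 : ((p.natDegree : ℤ) : WithBot ℤ) = ((df + n : ℤ) : WithBot ℤ) := by
    have h := degree_mul_T f (n : ℤ)
    rw [← hp, degree_toLaurent hp0, hdf, ← WithBot.coe_add] at h
    exact h
  have e2 : ((q.natDegree : ℤ) : WithBot ℤ) = ((dg + m : ℤ) : WithBot ℤ) := by
    have h := degree_mul_T g (m : ℤ)
    rw [← hq, degree_toLaurent hq0, hdg, ← WithBot.coe_add] at h
    exact h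
  have e3 : (((p * q).natDegree : ℤ) : WithBot ℤ) = ((dfg + (n + m) : ℤ) : WithBot ℤ) := by
    have h' : Polynomial.toLaurent (p * q) = (f * g) * T ((n : ℤ) + m) := by
      rw [map_mul, hp, hq, T_add]
      ring
    have h := degree_mul_T (f * g) ((n : ℤ) + m)
    rw [← h', degree_toLaurent (mul_ne_zero hp0 hq0), hdfg, ← WithBot.coe_add] at h
    exact h
  have npq : (p * q).natDegree = p.natDegree + q.natDegree := Polynomial.natDegree_mul hp0 hq0
  have e1' : (p.natDegree : ℤ) = df + n := WithBot.coe_inj.1 e1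
  have e2' : (q.natDegree : ℤ) = dg + m := WithBot.coe_inj.1 e2
  have e3' : ((p * q).natDegree : ℤ) = dfg + (n + m) := WithBot.coe_inj.1 e3
  have hfinal : dfg = df + dg := by
    rw [npq] at e3'
    push_cast at e3'
    omega
  rw [hdf, hdg, hdfg, hfinal, WithBot.coe_add]

lemma degree_add_eq_left {f g : L} (h : g.degree < f.degree) :
    (f + g).degree = f.degree ∧ f + g ≠ 0 := by
  have hf : f ≠ 0 := by
    rintro rfl
    rw [LaurentPolynomial.degree_zero] at h
    exact not_lt_bot h
  obtain ⟨d, hd, hfd⟩ := exists_degree hf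
  have hgd : g.coeff d = 0 := eq_zero_of_degree_lt (hd ▸ h)
  have hsum : (f + g : L).coeff d ≠ 0 := by
    have he : (f + g : L).coeff d = f.coeff d + g.coeff d := rfl
    rw [he, hgd, add_zero]; exact hfd
  constructor
  · refine le_antisymm ?_ ?_
    · apply Finset.max_le
      intro m hm
      have hm' : (f + g : L).coeff m ≠ 0 := Finsupp.mem_support_iff.1 hm
      have hor : f.coeff m ≠ 0 ∨ g.coeff m ≠ 0 := by
        by_contra hc
        push_neg at hc
        exact hm' (by show f.coeff m + g.coeff m = 0; rw [hc.1, hc.2, add_zero])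
      rcases hor with h' | h'
      · exact le_degree h'
      · exact (le_degree h').trans h.le
    · rw [hd]; exact le_degree hsum
  · intro h0
    rw [h0] at hsum
    exact hsum rfl

lemma key (t : L) (d : ℤ) (hd : 0 < d) (hdeg : t.degree = (d : WithBot ℤ))
    (b : ℕ → L) (hb0 : b 0 = 0) (hb1 : b 1 = 1)
    (hrec : ∀ n : ℕ, 1 ≤ n → b (n + 1) = t * b n + b (n - 1)) :
    ∀ n : ℕ, b (n + 1) ≠ 0 ∧ (b (n + 1)).degree = (((n : ℤ) * d : ℤ) : WithBot ℤ) := by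
  have ht0 : t ≠ 0 := fun h => by simp [h, LaurentPolynomial.degree_zero] at hdeg
  have hb2 : b 2 = t := by
    have h := hrec 1 le_rfl
    simpa [hb0, hb1] using h
  have hdeg1 : (b 1).degree = ((0 : ℤ) : WithBot ℤ) := by
    rw [hb1]
    have h1 : (1 : L) = LaurentPolynomial.C 1 := by simp
    rw [h1, degree_C one_ne_zero]
    rfl
  have main : ∀ n : ℕ,
      (b (n + 1) ≠ 0 ∧ (b (n + 1)).degree = (((n : ℤ) * d : ℤ) : WithBot ℤ)) ∧
      (b (n + 2) ≠ 0 ∧ (b (n + 2)).degree = ((((n : ℤ) + 1) * d : ℤ) : WithBot ℤ)) := by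
    intro n
    induction n with
    | zero =>
      refine ⟨⟨by rw [hb1]; exact one_ne_zero, by simpa using hdeg1⟩, ?_⟩
      rw [hb2]
      refine ⟨ht0, ?_⟩
      rw [hdeg]
      norm_num
    | succ n ih =>
      obtain ⟨⟨h1, hdeg1'⟩, h2, hdeg2⟩ := ih
      constructor
      · refine ⟨h2, ?_⟩
        rw [hdeg2]
        congr 2
      · have hr : b (n + 3) = t * b (n + 2) + b (n + 1) := by
          have h := hrec (n + 2) (by omega)
          simpa using h
        have hmul : (t * b (n + 2)).degree = ((((n : ℤ) + 2) * d : ℤ) : WithBot ℤ) := by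
          rw [degree_mul ht0 h2, hdeg, hdeg2, ← WithBot.coe_add]
          congr 1
          ring
        have hlt : (b (n + 1)).degree < (t * b (n + 2)).degree := by
          rw [hmul, hdeg1', WithBot.coe_lt_coe]
          nlinarith
        obtain ⟨hdadd, hne⟩ := degree_add_eq_left hlt
        rw [← hr] at hdadd hne
        refine ⟨hne, ?_⟩
        rw [hdadd, hmul]
        congr 2
  exact fun n => (main n).1

lemma bn_ne_zero_of_pos (t : L) (k : ℤ) (htk : t.coeff k ≠ 0) (hk : 0 < k)
    (b : ℕ → L) (hb0 : b 0 = 0) (hb1 : b 1 = 1)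
    (hrec : ∀ n : ℕ, 1 ≤ n → b (n + 1) = t * b n + b (n - 1)) :
    ∀ n : ℕ, 1 ≤ n → b n ≠ 0 := by
  have ht0 : t ≠ 0 := fun h => htk (by simp [h])
  obtain ⟨d, hdeg, _⟩ := exists_degree ht0
  have hkd : k ≤ d := WithBot.coe_le_coe.1 (hdeg ▸ le_degree htk)
  have hdpos : 0 < d := lt_of_lt_of_le hk hkd
  have hkey := key t d hdpos hdeg b hb0 hb1 hrec
  intro n hn
  obtain ⟨m, rfl⟩ := Nat.exists_eq_add_of_le hn
  simpa [Nat.add_comm] using (hkey m).1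

lemma exists_coeff (t : L) (ht : ∀ c : ZMod 2, t ≠ C c) : ∃ k : ℤ, t.coeff k ≠ 0 ∧ k ≠ 0 := by
  by_contra hc
  push_neg at hc
  apply ht (t.coeff 0)
  ext m
  rcases eq_or_ne m 0 with rfl | hm
  · rw [← single_eq_C]
    simp [AddMonoidAlgebra.coeff_single_apply]
  · have h0 : t.coeff m = 0 := by
      by_contra h
      exact hm (hc m h)
    rw [h0, ← single_eq_C]
    simp [AddMonoidAlgebra.coeff_single_apply, hm]

lemma char_two (x : L) : x + x = 0 := by
  rw [← two_smul (ZMod 2) x, show (2 : ZMod 2) = 0 from rfl, zero_smul]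

lemma bn_ne_zero (t : L) (ht : ∀ c : ZMod 2, t ≠ C c)
    (b : ℕ → L) (hb0 : b 0 = 0) (hb1 : b 1 = 1)
    (hrec : ∀ n : ℕ, 1 ≤ n → b (n + 1) = t * b n + b (n - 1)) :
    ∀ n : ℕ, 1 ≤ n → b n ≠ 0 := by
  obtain ⟨k, htk, hk⟩ := exists_coeff t ht
  rcases hk.lt_or_gt with hneg | hpos
  · have h1 : (invert t).coeff (-k) ≠ 0 := by simpa using htk
    intro m hm
    have h2 := bn_ne_zero_of_pos (invert t) (-k) h1 (by omega)
      (fun n => invert (b n))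
      (by show invert (b 0) = 0; rw [hb0, map_zero])
      (by show invert (b 1) = 1; rw [hb1, map_one])
      (fun n hn => by
        show invert (b (n + 1)) = invert t * invert (b n) + invert (b (n - 1))
        rw [hrec n hn, map_add, map_mul]) m hm
    exact fun h => h2 (by show invert (b m) = 0; rw [h, map_zero])
  · exact bn_ne_zero_of_pos t k htk hpos b hb0 hb1 hrec

lemma pow_eq (t : L) (b : ℕ → L)
    (hb0 : b 0 = 0) (hb1 : b 1 = 1) (hb2 : b 2 = t)
    (hrec : ∀ n : ℕ, 1 ≤ n → b (n + 1) = t * b n + b (n - 1)) :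
    ∀ n : ℕ, 1 ≤ n → (!![0, 1; 1, t]) ^ n = !![b (n-1), b n; b n, b (n+1)] := by
  intro n hn
  induction n, hn using Nat.le_induction with
  | base => rw [pow_one, hb0, hb1, hb2]
  | succ n hn ih =>
    rw [pow_succ, ih, Matrix.mul_fin_two]
    have h1 : b (n + 1) = t * b n + b (n - 1) := hrec n hn
    have h2 : b (n + 2) = t * b (n + 1) + b n := by
      have := hrec (n + 1) (by omega)
      simpa using this
    have h3 : n + 1 - 1 = n := rfl
    refine Matrix.ext fun i j => ?_
    fin_cases i <;> fin_cases j <;> simp [h3]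
    · linear_combination -h1
    · linear_combination -h2

end Stmt5Aux

/-- For non-constant `t ∈ F₂[u,u⁻¹]` and `b₀ = 0`, `b₁ = 1`, `b_{n+1} = t·b_n + b_{n-1}`:
for every `n ≥ 1`, `b_{n-1} + b_{n+1} ≠ 0`, and consequently `det(Lⁿ − I) ≠ 0`
where `L = [[0,1],[1,t]]`. -/
theorem stmt5 (t : LaurentPolynomial (ZMod 2)) (ht : ∀ c : ZMod 2, t ≠ C c)
    (b : ℕ → LaurentPolynomial (ZMod 2))
    (hb0 : b 0 = 0) (hb1 : b 1 = 1)
    (hrec : ∀ n : ℕ, 1 ≤ n → b (n + 1) = t * b n + b (n - 1)) :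
    ∀ n : ℕ, 1 ≤ n →
      b (n - 1) + b (n + 1) ≠ 0 ∧ ((!![0, 1; 1, t]) ^ n - 1).det ≠ 0 := by
  intro n hn
  have ht0 : t ≠ 0 := fun h => ht 0 (by rw [h, map_zero])
  have hbn := Stmt5Aux.bn_ne_zero t ht b hb0 hb1 hrec
  have hb2 : b 2 = t := by simpa [hb0, hb1] using hrec 1 le_rfl
  have hsum : b (n - 1) + b (n + 1) = t * b n := by
    rw [hrec n hn]
    linear_combination Stmt5Aux.char_two (b (n - 1))
  have hne : b (n - 1) + b (n + 1) ≠ 0 := by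
    rw [hsum]; exact mul_ne_zero ht0 (hbn n hn)
  refine ⟨hne, ?_⟩
  have hpow := Stmt5Aux.pow_eq t b hb0 hb1 hb2 hrec n hn
  rw [hpow]
  have hM : (!![(0 : LaurentPolynomial (ZMod 2)), 1; 1, t]).det = -1 := by
    simp [Matrix.det_fin_two]
  have h1 := Matrix.det_pow (!![(0 : LaurentPolynomial (ZMod 2)), 1; 1, t]) n
  rw [hpow, hM] at h1
  have hneg : (-1 : LaurentPolynomial (ZMod 2)) = 1 :=
    neg_eq_of_add_eq_zero_left (Stmt5Aux.char_two 1)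
  rw [hneg, one_pow, Matrix.det_fin_two] at h1
  norm_num at h1
  have hd : (!![b (n-1), b n; b n, b (n+1)] - 1).det = b (n - 1) + b (n + 1) := by
    rw [Matrix.det_fin_two]
    simp only [Matrix.sub_apply, Matrix.one_apply, Matrix.cons_val', Matrix.cons_val_zero,
      Matrix.cons_val_one, Matrix.head_cons, Matrix.empty_val', Matrix.cons_val_fin_one,
      Matrix.head_fin_const]
    norm_num
    linear_combination h1 - Stmt5Aux.char_two (b (n - 1)) - Stmt5Aux.char_two (b (n + 1)) +
      Stmt5Aux.char_two 1
  rw [hd]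
  exact hne
end

section
/- Define the Hamming weight |q| of a Laurent polynomial q ∈ F_2[u,u^{-1}] as the number of nonzero monomials. Let L = u + u^{-1}. Then for every nonzero q and every sufficiently large m, |L^{2^m}·q| = 2|q|. In particular, the sequence |L^n q| does not tend to infinity. -/
open LaurentPolynomial

lemma stmt10_coeff (n : ℤ) (q : LaurentPolynomial (ZMod 2)) (y : ℤ) :
    (T n * q : AddMonoidAlgebra (ZMod 2) ℤ).coeff y = q.coeff (y - n) := by
  have := AddMonoidAlgebra.coeff_single_mul_apply q (1 : ZMod 2) n y
  rw [neg_add_eq_sub, one_mul] at this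
  exact this

lemma stmt10_supp (n : ℤ) (q : LaurentPolynomial (ZMod 2)) :
    (T n * q).coeff.support = q.coeff.support.map ⟨(· + n), add_left_injective n⟩ := by
  ext y
  simp only [Finsupp.mem_support_iff, Finset.mem_map, Function.Embedding.coeFn_mk]
  rw [stmt10_coeff]
  constructor
  · intro h; exact ⟨y - n, h, by ring⟩
  · rintro ⟨a, ha, rfl⟩; simpa using ha

lemma stmt10_charP : CharP (LaurentPolynomial (ZMod 2)) 2 :=
  charP_of_injective_ringHom (f := AddMonoidAlgebra.singleZeroRingHom)
    (AddMonoidAlgebra.single_right_injective (m := (0:ℤ))) 2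

lemma stmt10_key (q : LaurentPolynomial (ZMod 2)) :
    ∀ m : ℕ, q.coeff.support.sup Int.natAbs < 2 ^ m →
      (((T 1 + T (-1) : LaurentPolynomial (ZMod 2)) ^ (2 ^ m) * q).coeff.support.card)
        = 2 * q.coeff.support.card := by
  intro m hm
  haveI := stmt10_charP
  have hfrob : (T 1 + T (-1) : LaurentPolynomial (ZMod 2)) ^ (2 ^ m)
      = T (2 ^ m) + T (-(2 ^ m)) := by
    rw [add_pow_char_pow, T_pow, T_pow]
    push_cast
    ring_nf
  rw [hfrob, add_mul]
  rw [AddMonoidAlgebra.coeff_add]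
  have hdisj : Disjoint (T ((2:ℤ) ^ m) * q).coeff.support (T (-(2:ℤ) ^ m) * q).coeff.support := by
    rw [stmt10_supp, stmt10_supp]
    rw [Finset.disjoint_left]
    rintro x hx hx'
    simp only [Finset.mem_map, Function.Embedding.coeFn_mk] at hx hx'
    obtain ⟨a, ha, rfl⟩ := hx
    obtain ⟨b, hb, hba⟩ := hx'
    have hA : a.natAbs ≤ q.coeff.support.sup Int.natAbs := Finset.le_sup ha
    have hB : b.natAbs ≤ q.coeff.support.sup Int.natAbs := Finset.le_sup hb
    have h2 : ((q.coeff.support.sup Int.natAbs : ℕ) : ℤ) < 2 ^ m := by exact_mod_cast hm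
    have hA' : ((a.natAbs : ℕ) : ℤ) ≤ ((q.coeff.support.sup Int.natAbs : ℕ) : ℤ) := by exact_mod_cast hA
    have hB' : ((b.natAbs : ℕ) : ℤ) ≤ ((q.coeff.support.sup Int.natAbs : ℕ) : ℤ) := by exact_mod_cast hB
    have ha1 : -((a.natAbs : ℕ) : ℤ) ≤ a := by simpa using neg_le_neg (Int.le_natAbs (a := -a))
    have hb1 : b ≤ ((b.natAbs : ℕ) : ℤ) := Int.le_natAbs
    have hd : (a:ℤ) - b = -2 * 2 ^ m := by linarith [hba]
    linarith
  rw [Finsupp.support_add_eq (by rwa [stmt10_supp] at hdisj ⊢)]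
  rw [Finset.card_union_of_disjoint (by rwa [stmt10_supp] at hdisj ⊢)]
  rw [stmt10_supp, stmt10_supp, Finset.card_map, Finset.card_map]
  ring

/-- With `L = u + u⁻¹` over `F₂[u,u⁻¹]` and Hamming weight `|q| = q.support.card`:
for every nonzero `q` and all sufficiently large `m`, `|L^(2^m)·q| = 2|q|`.
In particular the sequence `|Lⁿ q|` does not tend to infinity. -/
theorem stmt10 (q : LaurentPolynomial (ZMod 2)) (hq : q ≠ 0) :
    (∃ M : ℕ, ∀ m : ℕ, M ≤ m →
      (((T 1 + T (-1) : LaurentPolynomial (ZMod 2)) ^ (2 ^ m) * q).coeff.support.card)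
        = 2 * q.coeff.support.card) ∧
    ¬ Filter.Tendsto
        (fun n : ℕ => ((T 1 + T (-1) : LaurentPolynomial (ZMod 2)) ^ n * q).coeff.support.card)
        Filter.atTop Filter.atTop := by
  set B := q.coeff.support.sup Int.natAbs with hB
  have hpow : ∀ m : ℕ, B + 1 ≤ m → B < 2 ^ m := by
    intro m hmm
    calc B < 2 ^ B := Nat.lt_two_pow_self (n := B)
    _ ≤ 2 ^ m := Nat.pow_le_pow_right (by norm_num) (by omega)
  constructor
  · exact ⟨B + 1, fun m hm => stmt10_key q m (hpow m hm)⟩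
  · intro ht
    have hone : 0 < q.coeff.support.card := Finset.card_pos.mpr (by
      rw [Finset.nonempty_iff_ne_empty]
      simpa [Finsupp.support_eq_empty] using hq)
    obtain ⟨N, hN⟩ := (Filter.tendsto_atTop.mp ht (2 * q.coeff.support.card + 1)).exists_forall_of_atTop
    set m := max (B + 1) N with hm
    have h2m : N ≤ 2 ^ m := le_trans (le_max_right _ _) (le_trans (Nat.le_of_lt (Nat.lt_two_pow_self (n := m))) le_rfl)
    have := hN (2 ^ m) h2m
    rw [stmt10_key q m (hpow m (le_max_left _ _))] at this
    omega
end

section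
/- Let F(u) = [[0,1],[1,u]] over F_2[u,u^{-1}]. Then for every r ≥ 1, F^{2^r} = [[Σ_{j=1}^r u^{2^r − 2^j}, u^{2^r − 1}],[u^{2^r − 1}, u^{2^r} + Σ_{j=1}^r u^{2^r − 2^j}]]. -/
open LaurentPolynomial

noncomputable local instance : CharP (LaurentPolynomial (ZMod 2)) 2 :=
  charP_of_injective_ringHom (f := (C : ZMod 2 →+* LaurentPolynomial (ZMod 2)))
    (fun a b h => by simpa using congrArg (fun p : LaurentPolynomial (ZMod 2) => p.coeff 0) h) 2

private lemma key11 (n : ℕ) :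
    (∑ j ∈ Finset.Icc 1 n, (T ((2:ℤ)^n - 2^j) : LaurentPolynomial (ZMod 2))) ^ 2
      + (T ((2:ℤ)^n - 1) : LaurentPolynomial (ZMod 2)) ^ 2
    = ∑ j ∈ Finset.Icc 1 (n+1), (T ((2:ℤ)^(n+1) - 2^j) : LaurentPolynomial (ZMod 2)) := by
  rw [sum_pow_char 2]
  simp only [T_pow]
  have hins : Finset.Icc 1 (n+1) = insert 1 (Finset.Icc 2 (n+1)) := by
    ext x; simp [Finset.mem_Icc, Finset.mem_insert]; omega
  rw [hins, Finset.sum_insert (by simp)]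
  have hmap : Finset.Icc 2 (n+1) = Finset.map (addRightEmbedding 1) (Finset.Icc 1 n) := by
    rw [Finset.map_add_right_Icc]
  rw [hmap, Finset.sum_map]
  rw [add_comm]
  congr 1
  · congr 1; push_cast; ring
  · apply Finset.sum_congr rfl
    intro j _
    simp only [addRightEmbedding_apply]
    congr 1; push_cast [pow_succ]; ring

/-- For `F(u) = [[0,1],[1,u]]` over `F₂[u,u⁻¹]` and every `r ≥ 1`:
`F^(2^r) = [[Σ_{j=1}^r u^(2^r−2^j), u^(2^r−1)],[u^(2^r−1), u^(2^r) + Σ_{j=1}^r u^(2^r−2^j)]]`. -/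
theorem stmt11 (r : ℕ) (hr : 1 ≤ r) :
    (!![0, 1; 1, (T 1 : LaurentPolynomial (ZMod 2))]) ^ (2 ^ r) =
      !![∑ j ∈ Finset.Icc 1 r, T ((2 : ℤ) ^ r - 2 ^ j), T ((2 : ℤ) ^ r - 1);
         T ((2 : ℤ) ^ r - 1), T ((2 : ℤ) ^ r) + ∑ j ∈ Finset.Icc 1 r, T ((2 : ℤ) ^ r - 2 ^ j)] := by
  have h2 : (2 : LaurentPolynomial (ZMod 2)) = 0 := by
    exact_mod_cast CharP.cast_eq_zero (LaurentPolynomial (ZMod 2)) 2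
  induction r, hr using Nat.le_induction with
  | base =>
      rw [pow_one, pow_two, Matrix.mul_fin_two]
      have : Finset.Icc 1 1 = {1} := Finset.Icc_self 1
      rw [this, Finset.sum_singleton]
      norm_num
      rw [← T_add, ← T_zero, add_comm (T 0 : LaurentPolynomial (ZMod 2))]
      norm_num
  | succ n hn ih =>
      have hpow : (!![0, 1; 1, (T 1 : LaurentPolynomial (ZMod 2))]) ^ 2 ^ (n+1)
          = ((!![0, 1; 1, (T 1 : LaurentPolynomial (ZMod 2))]) ^ 2 ^ n) ^ 2 := by
        rw [← pow_mul, ← pow_succ]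
      rw [hpow, ih, pow_two, Matrix.mul_fin_two]
      set S : LaurentPolynomial (ZMod 2) := ∑ j ∈ Finset.Icc 1 n, T ((2:ℤ)^n - 2^j) with hS
      set b : LaurentPolynomial (ZMod 2) := T ((2:ℤ)^n - 1) with hb
      have h00 : S * S + b * b = ∑ j ∈ Finset.Icc 1 (n+1), (T ((2:ℤ)^(n+1) - 2^j) : LaurentPolynomial (ZMod 2)) := by
        rw [← pow_two, ← pow_two]; exact key11 n
      have hbT : b * T ((2:ℤ)^n) = T ((2:ℤ)^(n+1) - 1) := by
        rw [hb, ← T_add]; congr 1; push_cast [pow_succ]; ring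
      have h01 : S * b + b * (T ((2:ℤ)^n) + S) = T ((2:ℤ)^(n+1) - 1) := by
        rw [← hbT]; linear_combination (S * b) * h2
      have h10 : b * S + (T ((2:ℤ)^n) + S) * b = T ((2:ℤ)^(n+1) - 1) := by
        rw [← hbT]; linear_combination (S * b) * h2
      have hTT : (T ((2:ℤ)^n) : LaurentPolynomial (ZMod 2)) * T ((2:ℤ)^n) = T ((2:ℤ)^(n+1)) := by
        rw [← T_add]; congr 1; push_cast [pow_succ]; ring
      have h11 : b * b + (T ((2:ℤ)^n) + S) * (T ((2:ℤ)^n) + S)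
          = T ((2:ℤ)^(n+1)) + ∑ j ∈ Finset.Icc 1 (n+1), (T ((2:ℤ)^(n+1) - 2^j) : LaurentPolynomial (ZMod 2)) := by
        rw [← h00, ← hTT]; linear_combination (T ((2:ℤ)^n) * S) * h2
      rw [h00, h01, h10, h11]
end

section
/- Let t ∈ F_2[u,u^{-1}] be a non-constant Laurent polynomial, b_n defined by b_0=0, b_1=1, b_{n+1}=t b_n + b_{n-1}, and suppose t·b_n = u^k + u^{-k} for some n ≥ 1 and k ∈ ℤ. Then n divides k and t = u^{k/n} + u^{-k/n}. -/
set_option synthInstance.maxHeartbeats 1000000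
set_option maxHeartbeats 1000000
set_option linter.unusedVariables false

open LaurentPolynomial

namespace Stmt12Aux

open Polynomial

noncomputable section

lemma natTrailingDegree_pow' {F : Type*} [Field F] (p : F[X]) (hp : p ≠ 0) (q : ℕ) :
    (p ^ q).natTrailingDegree = q * p.natTrailingDegree := by
  induction q with
  | zero => simp
  | succ m ih =>
      rw [pow_succ, natTrailingDegree_mul (pow_ne_zero m hp) hp, ih]
      ring

lemma mono_of_tr_eq_deg {F : Type*} [Field F] {p : F[X]}
    (h : p.natTrailingDegree = p.natDegree) :
    p = Polynomial.C p.leadingCoeff * X ^ p.natDegree := by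
  ext i
  rw [coeff_C_mul, coeff_X_pow]
  rcases lt_trichotomy i p.natDegree with hi | rfl | hi
  · rw [if_neg hi.ne, mul_zero, coeff_eq_zero_of_lt_natTrailingDegree (h ▸ hi)]
  · rw [if_pos rfl, mul_one]; rfl
  · rw [if_neg hi.ne', mul_zero, coeff_eq_zero_of_natDegree_lt hi]

lemma pow_eq_X_pow {p : (ZMod 2)[X]} {q j : ℕ} (hq : 1 ≤ q)
    (h : p ^ q = X ^ j) : p = X ^ p.natDegree ∧ q * p.natDegree = j := by
  have hp : p ≠ 0 := by
    rintro rfl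
    rw [zero_pow (by omega)] at h
    exact (pow_ne_zero j X_ne_zero) h.symm
  have hdeg : q * p.natDegree = j := by
    have := congrArg natDegree h
    rwa [natDegree_pow, natDegree_X_pow] at this
  have htr : q * p.natTrailingDegree = j := by
    have := congrArg natTrailingDegree h
    rwa [natTrailingDegree_pow' p hp, natTrailingDegree_X_pow] at this
  have heq : p.natTrailingDegree = p.natDegree := by
    have := hdeg ▸ htr
    exact Nat.eq_of_mul_eq_mul_left (by omega) this
  have hlc : p.leadingCoeff = 1 := by
    have h0 : p.leadingCoeff ≠ 0 := leadingCoeff_ne_zero.mpr hp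
    have : ∀ c : ZMod 2, c ≠ 0 → c = 1 := by decide
    exact this _ h0
  constructor
  · have := mono_of_tr_eq_deg heq
    rwa [hlc, map_one, one_mul] at this
  · exact hdeg

lemma frobenius_constant {t : LaurentPolynomial (ZMod 2)} {q : ℕ} (hq : 2 ≤ q)
    (h : t ^ q = t) : ∃ c : ZMod 2, t = LaurentPolynomial.C c := by
  obtain ⟨q', rfl⟩ : ∃ q', q = q' + 2 := ⟨q - 2, by omega⟩
  obtain ⟨m, p, hp⟩ := t.exists_T_pow
  by_cases hp0 : p = 0
  · refine ⟨0, ?_⟩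
    rw [hp0, map_zero] at hp
    have ht0 : t = 0 := (isUnit_T (m:ℤ)).mul_right_cancel (by rw [← hp, zero_mul])
    simp [ht0]
  have key : p ^ (q' + 2) = p * Polynomial.X ^ ((q' + 1) * m) := by
    apply Polynomial.toLaurent_injective
    rw [map_mul, map_pow, hp, Polynomial.toLaurent_X_pow, mul_pow, T_pow, h, mul_T_assoc]
    congr 1
    push_cast
    ring
  have hd : (q' + 2) * p.natDegree = p.natDegree + (q' + 1) * m := by
    have := congrArg Polynomial.natDegree key
    rwa [Polynomial.natDegree_pow,
      Polynomial.natDegree_mul hp0 (pow_ne_zero _ Polynomial.X_ne_zero),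
      Polynomial.natDegree_X_pow] at this
  have htr : (q' + 2) * p.natTrailingDegree = p.natTrailingDegree + (q' + 1) * m := by
    have := congrArg Polynomial.natTrailingDegree key
    rwa [natTrailingDegree_pow' p hp0,
      Polynomial.natTrailingDegree_mul hp0 (pow_ne_zero _ Polynomial.X_ne_zero),
      Polynomial.natTrailingDegree_X_pow] at this
  have hdm : p.natDegree = m := by
    have e1 : (q' + 2) * p.natDegree = p.natDegree + (q' + 1) * p.natDegree := by ring
    exact Nat.eq_of_mul_eq_mul_left (Nat.succ_pos q') (by linarith)
  have heq : p.natTrailingDegree = p.natDegree := by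
    have e1 : (q' + 2) * p.natTrailingDegree
        = p.natTrailingDegree + (q' + 1) * p.natTrailingDegree := by ring
    have : p.natTrailingDegree = m := Nat.eq_of_mul_eq_mul_left (Nat.succ_pos q') (by linarith)
    rw [this, hdm]
  refine ⟨p.leadingCoeff, ?_⟩
  have hmono := mono_of_tr_eq_deg heq
  have h2 : toLaurent p = LaurentPolynomial.C p.leadingCoeff * T (m:ℤ) := by
    conv_lhs => rw [hmono]
    rw [map_mul, Polynomial.toLaurent_C, Polynomial.toLaurent_X_pow, hdm]
  rw [hp] at h2
  exact (isUnit_T (m:ℤ)).mul_right_cancel h2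

lemma key_rec {S : Type*} [CommRing S] (φ : LaurentPolynomial (ZMod 2) →+* S)
    (t : LaurentPolynomial (ZMod 2)) (b : ℕ → LaurentPolynomial (ZMod 2))
    (hb0 : b 0 = 0) (hb1 : b 1 = 1)
    (hrec : ∀ n : ℕ, 1 ≤ n → b (n + 1) = t * b n + b (n - 1))
    (α β : S) (hαβ : α * β = 1) (hs : α + β = φ t) (htwo : (2:S) = 0) :
    ∀ m : ℕ, φ (t * b m) = α ^ m + β ^ m := by
  have main : ∀ m : ℕ, φ (t * b m) = α ^ m + β ^ m ∧
      φ (t * b (m+1)) = α ^ (m+1) + β ^ (m+1) := by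
    intro m
    induction m with
    | zero =>
        constructor
        · rw [hb0, mul_zero, map_zero]
          linear_combination -htwo
        · rw [hb1, mul_one]
          linear_combination -hs
    | succ m ih =>
        refine ⟨ih.2, ?_⟩
        rw [hrec (m+1) (by omega), Nat.add_sub_cancel, mul_add, map_add, map_mul,
          ← hs, map_mul, ih.1]
        have h2 := ih.2
        rw [map_mul] at h2
        rw [h2]
        linear_combination (α^m + β^m) * hαβ + (α^m + β^m) * htwo
  exact fun m => (main m).1

lemma quad_zero {F : Type*} [Field F] (htwo : (2:F) = 0) {α β wk wmk : F} {n : ℕ}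
    (hαβ : α * β = 1) (hw : wk * wmk = 1)
    (hsum : α ^ n + β ^ n = wk + wmk) : α ^ n = wk ∨ α ^ n = wmk := by
  have hmul : α ^ n * β ^ n = 1 := by rw [← mul_pow, hαβ, one_pow]
  have hzero : (α ^ n + wk) * (α ^ n + wmk) = 0 := by
    linear_combination α ^ n * hsum + hmul + hw +
      (1 + α ^ n * wk + α ^ n * wmk - α ^ n * β ^ n) * htwo
  rcases mul_eq_zero.mp hzero with hc | hc
  · left; linear_combination hc - wk * htwo
  · right; linear_combination hc - wmk * htwo

lemma finite_pow_fix {L : Type*} [Field L] [CharP L 2] {α x : L} {n : ℕ} (hn : 1 ≤ n)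
    (hα : α ^ n = 1) (hx : x = α + α ^ (n - 1)) :
    ∃ q : ℕ, 2 ≤ q ∧ x ^ q = x := by
  letI : Algebra (ZMod 2) L := ZMod.algebra _ _
  have hint : IsIntegral (ZMod 2) α :=
    ⟨X ^ n - Polynomial.C 1, monic_X_pow_sub_C 1 (by omega), by simp [hα]⟩
  set S := Algebra.adjoin (ZMod 2) ({α} : Set L) with hS
  have hxm : x ∈ S := by
    have hm : α ∈ S := Algebra.subset_adjoin rfl
    rw [hx]
    exact S.add_mem hm (S.pow_mem hm _)
  haveI : Module.Finite (ZMod 2) S :=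
    Module.Finite.iff_fg.mpr hint.fg_adjoin_singleton
  haveI : Finite S := Module.finite_of_finite (ZMod 2)
  haveI : Fintype S := Fintype.ofFinite _
  letI : Field S := @Fintype.fieldOfDomain S _ _ (Classical.decEq S) _
  refine ⟨Fintype.card S, Fintype.one_lt_card, ?_⟩
  have h1 := FiniteField.pow_card (⟨x, hxm⟩ : S)
  have h2 := congrArg (Subtype.val) h1
  push_cast at h2
  exact_mod_cast h2

abbrev Rng := LaurentPolynomial (ZMod 2)
abbrev Kf := RatFunc (ZMod 2)

instance : Algebra Rng Kf := by
  haveI := LaurentPolynomial.isLocalization (R := ZMod 2)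
  exact (IsLocalization.lift (M := Submonoid.powers (Polynomial.X : (ZMod 2)[X]))
    (g := algebraMap (ZMod 2)[X] Kf) (by
      rintro ⟨y, n, rfl⟩
      simp only [map_pow]
      exact (IsUnit.pow n (isUnit_iff_ne_zero.mpr (by
        exact RatFunc.algebraMap_ne_zero Polynomial.X_ne_zero))))).toAlgebra

instance : IsScalarTower (ZMod 2)[X] Rng Kf := by
  haveI := LaurentPolynomial.isLocalization (R := ZMod 2)
  refine IsScalarTower.of_algebraMap_eq fun x => ?_
  exact (IsLocalization.lift_eq _ x).symm

instance : IsFractionRing Rng Kf := by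
  haveI := LaurentPolynomial.isLocalization (R := ZMod 2)
  exact IsFractionRing.isFractionRing_of_isDomain_of_isLocalization
    (Submonoid.powers (Polynomial.X : (ZMod 2)[X])) Rng Kf

def w : Kf := algebraMap (ZMod 2)[X] Kf Polynomial.X

lemma w_ne_zero : w ≠ 0 := by
  simpa [w] using RatFunc.algebraMap_ne_zero (Polynomial.X_ne_zero (R := ZMod 2))

lemma algMap_T (n : ℤ) : algebraMap Rng Kf (T n) = w ^ n := by
  have hnat : ∀ m : ℕ, algebraMap Rng Kf (T (m:ℤ)) = w ^ (m:ℤ) := by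
    intro m
    rw [← Polynomial.toLaurent_X_pow, ← algebraMap_eq_toLaurent,
      ← IsScalarTower.algebraMap_apply, map_pow, zpow_natCast]
    rfl
  induction n using Int.rec with
  | ofNat m => exact hnat m
  | negSucc m =>
      rw [zpow_negSucc]
      have h0 : Int.negSucc m + ((m+1:ℕ):ℤ) = 0 := by
        push_cast [Int.negSucc_eq]; ring
      have h1 : (T (Int.negSucc m) : Rng) * T ((m+1 : ℕ) : ℤ) = 1 := by
        rw [← T_add, h0, T_zero]
      have h2 := congrArg (algebraMap Rng Kf) h1
      rw [map_mul, map_one, hnat, zpow_natCast] at h2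
      rw [mul_comm] at h2
      exact eq_inv_of_mul_eq_one_right h2

lemma root_monomial_nonneg {α : Kf} {n : ℕ} (hn : 1 ≤ n) {j : ℕ}
    (h : α ^ n = w ^ j) : ∃ d : ℕ, α = w ^ d ∧ n * d = j := by
  have hint : IsIntegral (ZMod 2)[X] α := by
    refine ⟨Polynomial.X ^ n - Polynomial.C (Polynomial.X ^ j),
      monic_X_pow_sub_C _ (by omega), ?_⟩
    rw [eval₂_sub, eval₂_X_pow, Polynomial.eval₂_C, h, w, map_pow, sub_self]
  obtain ⟨p, hp⟩ := IsIntegrallyClosed.isIntegral_iff.mp hint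
  have hpn : p ^ n = Polynomial.X ^ j := by
    apply IsFractionRing.injective (ZMod 2)[X] Kf
    rw [map_pow, hp, h, w, map_pow]
  obtain ⟨hmono, hdeg⟩ := pow_eq_X_pow hn hpn
  refine ⟨p.natDegree, ?_, hdeg⟩
  rw [w, ← map_pow, ← hmono, hp]

lemma root_monomial {α : Kf} (hα : α ≠ 0) {n : ℕ} (hn : 1 ≤ n) {K' : ℤ}
    (h : α ^ n = w ^ K') : ∃ M : ℤ, α = w ^ M ∧ (n:ℤ) * M = K' := by
  rcases le_or_gt 0 K' with hK | hK
  · lift K' to ℕ using hK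
    rw [zpow_natCast] at h
    obtain ⟨d, hd, hnd⟩ := root_monomial_nonneg hn h
    exact ⟨d, by rw [hd, zpow_natCast], by exact_mod_cast hnd⟩
  · have h' : (α⁻¹) ^ n = w ^ ((-K').toNat) := by
      rw [inv_pow, h, ← zpow_natCast, Int.toNat_of_nonneg (by omega), zpow_neg]
    obtain ⟨d, hd, hnd⟩ := root_monomial_nonneg hn h'
    refine ⟨-d, ?_, ?_⟩
    · rw [← inv_inv α, hd, ← zpow_natCast, ← zpow_neg]
    · have h3 : (n:ℤ) * d = -K' := by
        rw [← Int.toNat_of_nonneg (by omega : 0 ≤ -K')]; exact_mod_cast hnd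
      rw [mul_neg, h3, neg_neg]

lemma T_inj {a b : ℤ} (h : (T a : Rng) = T b) : a = b := by
  classical
  by_contra hab
  have := congrArg LaurentPolynomial.degree h
  simp only [LaurentPolynomial.degree_T] at this
  exact hab (WithBot.coe_injective this)

lemma h2R : (2 : Rng) = 0 := by
  have h1 := map_ofNat (LaurentPolynomial.C (R := ZMod 2)) 2
  have h2 : (2 : ZMod 2) = 0 := by decide
  rw [← h1, h2, map_zero]

lemma htwoK : (2 : Kf) = 0 := by
  have h1 := map_ofNat (algebraMap Rng Kf) 2
  rw [← h1, h2R, map_zero]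

lemma w_zpow_eq_one {m : ℤ} (h : w ^ m = 1) : m = 0 := by
  have h1 : algebraMap Rng Kf (T m) = algebraMap Rng Kf (T 0) := by
    rw [algMap_T, algMap_T, zpow_zero, h]
  exact T_inj (IsFractionRing.injective Rng Kf h1)

end

end Stmt12Aux

/-- Let `t ∈ F₂[u,u⁻¹]` be non-constant, `b₀ = 0`, `b₁ = 1`, `b_{n+1} = t·b_n + b_{n-1}`,
and suppose `t·b_n = uᵏ + u⁻ᵏ` for some `n ≥ 1` and `k ∈ ℤ`. Then `n ∣ k` and
`t = u^(k/n) + u^(−k/n)`. -/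
theorem stmt12 (t : LaurentPolynomial (ZMod 2)) (ht : ∀ c : ZMod 2, t ≠ C c)
    (b : ℕ → LaurentPolynomial (ZMod 2))
    (hb0 : b 0 = 0) (hb1 : b 1 = 1)
    (hrec : ∀ n : ℕ, 1 ≤ n → b (n + 1) = t * b n + b (n - 1))
    (n : ℕ) (hn : 1 ≤ n) (k : ℤ) (h : t * b n = T k + T (-k)) :
    (n : ℤ) ∣ k ∧ t = T (k / (n : ℤ)) + T (-(k / (n : ℤ))) := by
  classical
  open Stmt12Aux Polynomial in
  -- setup
  let φ : Rng →+* Kf := algebraMap Rng Kf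
  have hφinj : Function.Injective φ := IsFractionRing.injective Rng Kf
  have ht0 : t ≠ 0 := fun h0 => ht 0 (by rw [h0, map_zero])
  have hwk : ∀ K' : ℤ, (w : Kf) ^ K' * w ^ (-K') = 1 := fun K' => by
    rw [← zpow_add₀ w_ne_zero]; simp
  have hhK : φ (t * b n) = w ^ k + w ^ (-k) := by
    rw [h, map_add, algMap_T, algMap_T]
  by_cases hex : ∃ α : Kf, α * (α + φ t) = 1
  · -- split case: quadratic has a root in Kf
    obtain ⟨α, hα1⟩ := hex
    set β := α + φ t with hβ
    have hα0 : α ≠ 0 := left_ne_zero_of_mul_eq_one hα1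
    have hs : α + β = φ t := by rw [hβ]; linear_combination α * htwoK
    have hkey := key_rec φ t b hb0 hb1 hrec α β hα1 hs htwoK n
    have hsum : α ^ n + β ^ n = w ^ k + w ^ (-k) := by rw [← hkey, hhK]
    have hc : ∃ K' : ℤ, (K' = k ∨ K' = -k) ∧ α ^ n = w ^ K' := by
      rcases quad_zero htwoK hα1 (hwk k) hsum with hc | hc
      · exact ⟨k, Or.inl rfl, hc⟩
      · exact ⟨-k, Or.inr rfl, hc⟩
    obtain ⟨K', hK'k, hαn⟩ := hc
    obtain ⟨M, hM, hnM⟩ := root_monomial hα0 hn hαn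
    -- t = T M + T (-M)
    have hβinv : β = α⁻¹ := eq_inv_of_mul_eq_one_right hα1
    have hφt : φ t = w ^ M + w ^ (-M) := by
      rw [← hs, hM, hβinv, hM, ← zpow_neg]
    have htM : t = T M + T (-M) := by
      apply hφinj
      rw [map_add, algMap_T, algMap_T, hφt]
    have hM0 : M ≠ 0 := by
      rintro rfl
      apply ht0
      have e : (T (0:ℤ) : Rng) + T (-0) = 0 := by
        rw [neg_zero, T_zero, ← h2R]; ring
      exact htM.trans e
    have hn0 : (n : ℤ) ≠ 0 := by exact_mod_cast (by omega : n ≠ 0)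
    rcases hK'k with rfl | rfl
    · refine ⟨⟨M, hnM.symm⟩, ?_⟩
      rw [← hnM, Int.mul_ediv_cancel_left _ hn0, htM]
    · have hk : k = (n:ℤ) * (-M) := by rw [mul_neg, hnM, neg_neg]
      refine ⟨⟨-M, hk⟩, ?_⟩
      rw [hk, Int.mul_ediv_cancel_left _ hn0, htM, neg_neg]
      ring
  · -- no root: contradiction
    exfalso
    set t' : Kf := φ t with ht'
    set f : Kf[X] := Polynomial.X ^ 2 + Polynomial.C t' * Polynomial.X + 1 with hf
    have hmonic : f.Monic := by
      unfold f
      monicity!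
    have hnd : f.natDegree = 2 := by
      unfold f
      compute_degree!
    have hroots : f.roots = 0 := by
      rw [Multiset.eq_zero_iff_forall_notMem]
      intro r hr
      rw [mem_roots hmonic.ne_zero] at hr
      have hev : r ^ 2 + t' * r + 1 = 0 := by
        have := hr
        simpa [hf, IsRoot] using this
      exact hex ⟨r, by linear_combination hev - htwoK⟩
    have hirr : Irreducible f :=
      (hmonic.irreducible_iff_roots_eq_zero_of_degree_le_three (by omega) (by omega)).mpr hroots
    haveI : Fact (Irreducible f) := ⟨hirr⟩
    let L := AdjoinRoot f
    let ψ : Kf →+* L := algebraMap Kf L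
    have hψinj : Function.Injective ψ := ψ.injective
    have htwoL : (2 : L) = 0 := by
      have := congrArg ψ htwoK
      rw [map_ofNat, map_zero] at this
      exact this
    haveI : CharP Kf 2 := by
      refine charP_of_injective_ringHom (algebraMap (ZMod 2) Kf).injective 2
    haveI : CharP L 2 :=
      charP_of_injective_ringHom (ψ.comp (algebraMap (ZMod 2) Kf)).injective 2
    set α : L := AdjoinRoot.root f with hαdef
    have hαroot : α ^ 2 + ψ t' * α + 1 = 0 := by
      have h0 := AdjoinRoot.eval₂_root f
      simp [hf] at h0
      exact h0
    set β : L := α + ψ t' with hβ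
    have hα1 : α * β = 1 := by
      rw [hβ]; linear_combination hαroot - htwoL
    have hα0 : α ≠ 0 := left_ne_zero_of_mul_eq_one hα1
    have hs : α + β = (ψ.comp φ) t := by
      rw [hβ, RingHom.comp_apply, ← ht']
      linear_combination α * htwoL
    have hkey := key_rec (ψ.comp φ) t b hb0 hb1 hrec α β hα1 hs htwoL n
    set v : L := ψ w with hv
    have hvK : ∀ m : ℤ, ψ (w ^ m) = v ^ m := fun m => map_zpow₀ ψ w m
    have hsum : α ^ n + β ^ n = v ^ k + v ^ (-k) := by
      rw [← hkey, RingHom.comp_apply, hhK, map_add, hvK, hvK]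
    have hwkL : v ^ k * v ^ (-k) = 1 := by
      rw [← hvK, ← hvK, ← map_mul, hwk k, map_one]
    obtain ⟨K', hK'k, hαn⟩ : ∃ K' : ℤ, (K' = k ∨ K' = -k) ∧ α ^ n = v ^ K' := by
      rcases quad_zero htwoL hα1 hwkL hsum with hc | hc
      · exact ⟨k, Or.inl rfl, hc⟩
      · exact ⟨-k, Or.inr rfl, hc⟩
    -- conjugation automorphism
    have hβaeval : Polynomial.aeval β f = 0 := by
      have e : Polynomial.aeval β f = β ^ 2 + ψ t' * β + 1 := by
        show Polynomial.aeval β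
          (Polynomial.X ^ 2 + Polynomial.C t' * Polynomial.X + 1) = _
        simp only [map_add, map_mul, map_pow, map_one, Polynomial.aeval_X, Polynomial.aeval_C]
        rfl
      rw [e, hβ]
      linear_combination hαroot + (ψ t' * ψ t' + ψ t' * α) * htwoL
    let σ : L →ₐ[Kf] L := AdjoinRoot.liftAlgHom f (Algebra.ofId Kf L) β hβaeval
    have hσα : σ α = β := AdjoinRoot.liftAlgHom_root _ _ _ hβaeval
    have hβn : β ^ n = v ^ K' := by
      have h1 := congrArg σ hαn
      rw [map_pow, hσα] at h1
      have h2 : σ (v ^ K') = v ^ K' := by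
        calc σ (v ^ K') = σ (ψ (w ^ K')) := by rw [hvK]
        _ = ψ (w ^ K') := σ.commutes _
        _ = v ^ K' := hvK K'
      exact h1.trans h2
    have hKK : (2 : ℤ) * K' = 0 := by
      have h1 : v ^ K' * v ^ K' = 1 := by
        calc v ^ K' * v ^ K' = α ^ n * β ^ n := by rw [hαn, hβn]
          _ = 1 := by rw [← mul_pow, hα1, one_pow]
      have hv0 : v ≠ 0 := by
        intro h0
        exact w_ne_zero (hψinj (by rw [← hv, h0, map_zero]))
      have h2 : w ^ ((2:ℤ) * K') = 1 := by
        apply hψinj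
        rw [map_one]
        calc ψ (w ^ ((2:ℤ) * K')) = v ^ ((2:ℤ) * K') := hvK _
          _ = v ^ K' * v ^ K' := by rw [two_mul, zpow_add₀ hv0]
          _ = 1 := h1
      exact w_zpow_eq_one h2
    have hK0 : K' = 0 := by omega
    have hαn1 : α ^ n = 1 := by rw [hαn, hK0, zpow_zero]
    -- finite subring argument
    have hβpow : β = α ^ (n - 1) := by
      have e : α * α ^ (n - 1) = α ^ n := by
        rw [← pow_succ']
        congr 1
        omega
      apply mul_left_cancel₀ hα0
      rw [hα1, e, hαn1]
    obtain ⟨q, hq2, hfix⟩ := finite_pow_fix hn hαn1 (x := ψ t')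
      (by rw [← hβpow, hβ]; linear_combination (-α) * htwoL)
    have htq : t ^ q = t := by
      apply hφinj
      apply hψinj
      rw [map_pow, map_pow]
      exact hfix
    obtain ⟨c, hc⟩ := frobenius_constant hq2 htq
    exact ht c hc
end
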